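/- For the pure action profile r_k = (1,...,1,0,...,0) (first k firms disclose, the rest conceal) in the N-firm information sharing game with product monitoring, the 4×2^N matrix A_{1N}(r_k) stacking the signal distributions induced by (r₁=0), (r₁=1), (r_N=0), (r_N=1) (other firms fixed at r_k) has rank exactly 3, whenever 0 < ε < 1/2 < α < 1. In particular, the rows corresponding to r₁=1 and r_N=0 are identical. -/
import Mathlib

/-- Belief distribution: π(b | r). -/
def piSig (ε α : ℝ) (b r : Bool) : ℝ :=
  if r then (if b then 1 - ε else ε) else (if b then 1 - α else α)

/-- Signal distribution row: firm `i` plays `a`, every other firm `j` plays the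
profile r_k (disclose iff j < k). -/
def rowDist (N k : ℕ) (ε α : ℝ) (i : Fin N) (a : Bool) : (Fin N → Bool) → ℝ :=
  fun b => ∏ j : Fin N, piSig ε α (b j) (if j = i then a else decide ((j : ℕ) < k))

lemma piSig_pos {ε α : ℝ} (hε0 : 0 < ε) (hε1 : ε < 1/2) (hα0 : 1/2 < α) (hα1 : α < 1)
    (b r : Bool) : 0 < piSig ε α b r := by
  unfold piSig; cases r <;> cases b <;> simp <;> linarith

/-- Product of the off-`i` factors. -/
noncomputable def Qprod (N k : ℕ) (ε α : ℝ) (i : Fin N) (b : Fin N → Bool) : ℝ :=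
  ∏ j ∈ {i}ᶜ, piSig ε α (b j) (decide ((j : ℕ) < k))

lemma rowDist_eq (N k : ℕ) (ε α : ℝ) (i : Fin N) (a : Bool) (b : Fin N → Bool) :
    rowDist N k ε α i a b = piSig ε α (b i) a * Qprod N k ε α i b := by
  unfold rowDist Qprod
  rw [Fintype.prod_eq_mul_prod_compl i]
  congr 1
  · simp
  · refine Finset.prod_congr rfl fun j hj => ?_
    rw [if_neg (by simpa using hj)]

lemma Qprod_pos {ε α : ℝ} (hε0 : 0 < ε) (hε1 : ε < 1/2) (hα0 : 1/2 < α) (hα1 : α < 1)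
    (N k : ℕ) (i : Fin N) (b : Fin N → Bool) : 0 < Qprod N k ε α i b :=
  Finset.prod_pos fun j _ => piSig_pos hε0 hε1 hα0 hα1 _ _

/-- Pairwise full rank at profile r_k = (1,...,1,0,...,0): the 4×2^N matrix stacking the
signal distributions induced by (r₁=0), (r₁=1), (r_N=0), (r_N=1) has rank exactly 3,
and the rows for r₁=1 and r_N=0 are identical, whenever 0 < ε < 1/2 < α < 1. -/
theorem stmt8 (N k : ℕ) (hN : 2 ≤ N) (hk1 : 1 ≤ k) (hk2 : k ≤ N - 1) (ε α : ℝ)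
    (hε : ε ∈ Set.Ioo (0 : ℝ) (1/2)) (hα : α ∈ Set.Ioo (1/2 : ℝ) 1) :
    let i1 : Fin N := ⟨0, by omega⟩
    let iN : Fin N := ⟨N - 1, by omega⟩
    let M : Matrix (Fin 4) (Fin N → Bool) ℝ :=
      Matrix.of ![rowDist N k ε α i1 false, rowDist N k ε α i1 true,
                  rowDist N k ε α iN false, rowDist N k ε α iN true]
    M 1 = M 2 ∧ M.rank = 3 := by
  intro i1 iN M
  obtain ⟨hε0, hε1⟩ := hε
  obtain ⟨hα0, hα1⟩ := hα
  have hεα : ε < α := by linarith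
  have hMdef : M = Matrix.of ![rowDist N k ε α i1 false, rowDist N k ε α i1 true,
                  rowDist N k ε α iN false, rowDist N k ε α iN true] := rfl
  have hi1iN : i1 ≠ iN := by
    simp only [i1, iN, Fin.ne_iff_vne]; omega
  -- row 1 = row 2
  have hM12 : M 1 = M 2 := by
    rw [hMdef]
    show rowDist N k ε α i1 true = rowDist N k ε α iN false
    funext b
    unfold rowDist
    refine Finset.prod_congr rfl fun j _ => ?_
    congr 1
    by_cases h1 : j = i1
    · subst h1
      rw [if_pos rfl, if_neg hi1iN]
      have hv : (i1 : ℕ) = 0 := rfl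
      exact (decide_eq_true (by omega : (i1 : ℕ) < k)).symm
    · by_cases h2 : j = iN
      · subst h2
        rw [if_neg h1, if_pos rfl]
        have hv : (iN : ℕ) = N - 1 := rfl
        exact decide_eq_false (by omega : ¬ (iN : ℕ) < k)
      · rw [if_neg h1, if_neg h2]
  refine ⟨hM12, ?_⟩
  -- entries
  have hrow : ∀ (r : Fin 4) (i : Fin N) (a : Bool), M r = rowDist N k ε α i a →
      ∀ b, M r b = piSig ε α (b i) a * Qprod N k ε α i b := by
    intro r i a h b; rw [h, rowDist_eq]
  have e0 : ∀ b, M 0 b = piSig ε α (b i1) false * Qprod N k ε α i1 b :=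
    hrow 0 i1 false rfl
  have e1 : ∀ b, M 1 b = piSig ε α (b i1) true * Qprod N k ε α i1 b :=
    hrow 1 i1 true rfl
  have e2 : ∀ b, M 2 b = piSig ε α (b iN) false * Qprod N k ε α iN b :=
    hrow 2 iN false rfl
  have e3 : ∀ b, M 3 b = piSig ε α (b iN) true * Qprod N k ε α iN b :=
    hrow 3 iN true rfl
  -- piSig values
  have pFF : piSig ε α false false = α := rfl
  have pTF : piSig ε α true false = 1 - α := rfl
  have pFT : piSig ε α false true = ε := rfl
  have pTT : piSig ε α true true = 1 - ε := rfl
  rw [Matrix.rank]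
  apply le_antisymm
  · -- rank ≤ 3
    set f : (Fin 4 → ℝ) →ₗ[ℝ] ℝ :=
      (LinearMap.proj 1 : (Fin 4 → ℝ) →ₗ[ℝ] ℝ) - LinearMap.proj 2 with hf
    have hker : LinearMap.range M.mulVecLin ≤ LinearMap.ker f := by
      rintro y ⟨v, rfl⟩
      simp [hf, LinearMap.mem_ker, Matrix.mulVecLin_apply, Matrix.mulVec, hM12]
    have hsurj : Function.Surjective f := by
      intro x
      refine ⟨Pi.single 1 x, ?_⟩
      simp [hf, Pi.single_apply]
    have hrk : Module.finrank ℝ (LinearMap.range f) = 1 := by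
      rw [LinearMap.range_eq_top.mpr hsurj]
      simp
    have hdim := LinearMap.finrank_range_add_finrank_ker f
    have h4 : Module.finrank ℝ (Fin 4 → ℝ) = 4 := by simp
    have hkerdim : Module.finrank ℝ (LinearMap.ker f) = 3 := by omega
    calc Module.finrank ℝ (LinearMap.range M.mulVecLin)
        ≤ Module.finrank ℝ (LinearMap.ker f) := Submodule.finrank_mono hker
      _ = 3 := hkerdim
  · -- rank ≥ 3
    set b0 : Fin N → Bool := fun _ => false with hb0
    set b1 : Fin N → Bool := fun j => decide (j = i1) with hb1
    set b2 : Fin N → Bool := fun j => decide (j = iN) with hb2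
    have hb0i1 : b0 i1 = false := rfl
    have hb0iN : b0 iN = false := rfl
    have hb1i1 : b1 i1 = true := by simp [hb1]
    have hb1iN : b1 iN = false := by simp [hb1, Ne.symm hi1iN]
    have hb2i1 : b2 i1 = false := by simp [hb2, hi1iN]
    have hb2iN : b2 iN = true := by simp [hb2]
    set w : Fin 3 → (Fin 4 → ℝ) :=
      ![fun i => M i b0, fun i => M i b1, fun i => M i b2] with hw
    have hspan : Submodule.span ℝ (Set.range w) ≤ LinearMap.range M.mulVecLin := by
      rw [Submodule.span_le]
      rintro _ ⟨t, rfl⟩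
      fin_cases t
      · exact ⟨Pi.single b0 1, by funext i; simp [hw, Matrix.mulVecLin_apply]⟩
      · exact ⟨Pi.single b1 1, by funext i; simp [hw, Matrix.mulVecLin_apply]⟩
      · exact ⟨Pi.single b2 1, by funext i; simp [hw, Matrix.mulVecLin_apply]⟩
    have Q10 := Qprod_pos hε0 hε1 hα0 hα1 N k i1 b0
    have Q11 := Qprod_pos hε0 hε1 hα0 hα1 N k i1 b1
    have Q12 := Qprod_pos hε0 hε1 hα0 hα1 N k i1 b2
    have QN0 := Qprod_pos hε0 hε1 hα0 hα1 N k iN b0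
    have QN2 := Qprod_pos hε0 hε1 hα0 hα1 N k iN b2
    have hli : LinearIndependent ℝ w := by
      rw [Fintype.linearIndependent_iff]
      intro g hg
      have c0 := congrFun hg 0
      have c1 := congrFun hg 1
      have c2 := congrFun hg 2
      have c3 := congrFun hg 3
      simp only [Fin.sum_univ_three, hw, Pi.add_apply, Pi.smul_apply, smul_eq_mul,
        Matrix.cons_val_zero, Matrix.cons_val_one, Matrix.head_cons, Matrix.cons_val_two,
        Matrix.tail_cons, Pi.zero_apply] at c0 c1 c2 c3
      rw [e0 b0, e0 b1, e0 b2, hb0i1, hb1i1, hb2i1, pFF, pTF] at c0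
      rw [e1 b0, e1 b1, e1 b2, hb0i1, hb1i1, hb2i1, pFT, pTT] at c1
      rw [e2 b0, e2 b1, e2 b2, hb0iN, hb1iN, hb2iN, pFF, pTF] at c2
      rw [e3 b0, e3 b1, e3 b2, hb0iN, hb1iN, hb2iN, pFT, pTT] at c3
      have hg1 : g 1 * ((α - ε) * Qprod N k ε α i1 b1) = 0 := by
        linear_combination α * c1 - ε * c0
      have hg1' : g 1 = 0 := by
        rcases mul_eq_zero.mp hg1 with h | h
        · exact h
        · exact absurd h (ne_of_gt (mul_pos (by linarith) Q11))
      have hg2 : g 2 * ((ε - α) * Qprod N k ε α iN b2) = 0 := by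
        linear_combination ε * c2 - α * c3
      have hg2' : g 2 = 0 := by
        rcases mul_eq_zero.mp hg2 with h | h
        · exact h
        · exact absurd h (ne_of_lt (mul_neg_of_neg_of_pos (by linarith) QN2))
      have hg0 : g 0 * (ε * Qprod N k ε α i1 b0) = 0 := by
        linear_combination c1 - ((1-ε) * Qprod N k ε α i1 b1) * hg1'
          - (ε * Qprod N k ε α i1 b2) * hg2'
      have hg0' : g 0 = 0 := by
        rcases mul_eq_zero.mp hg0 with h | h
        · exact h
        · exact absurd h (ne_of_gt (mul_pos hε0 Q10))
      intro i; fin_cases i <;> assumption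
    calc (3 : ℕ) = Module.finrank ℝ (Submodule.span ℝ (Set.range w)) := by
          rw [finrank_span_eq_card hli]; simp
      _ ≤ Module.finrank ℝ (LinearMap.range M.mulVecLin) := Submodule.finrank_mono hspan
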